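/- Let 𝒜 be a central hyperplane arrangement and write Mag(𝒜) = P/Q in lowest terms with Q monic. Then both P and Q are palindromic polynomials: P.reverse = P and Q.reverse = Q, where reverse denotes reversal of the coefficient sequence (Polynomial.reverse). -/
import Mathlib


open Matrix

noncomputable section

variable {E : Type*} [AddCommGroup E] [Module ℝ E]

/-- A sign vector `σ : ι → SignType` is a chamber of the arrangement `α` if it takes
values in `{+1, -1}` and is realizable by some point. -/
def IsChamber {ι : Type*} (α : ι → (E →ₗ[ℝ] ℝ)) (σ : ι → SignType) : Prop :=
  (∀ i, σ i ≠ 0) ∧ ∃ x : E, ∀ i, (σ i : ℝ) * α i x > 0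

/-- The type of chambers of the arrangement `α`. -/
def Chamber {ι : Type*} (α : ι → (E →ₗ[ℝ] ℝ)) : Type _ :=
  {σ : ι → SignType // IsChamber α σ}

noncomputable instance chamberFintype {ι : Type*} [Fintype ι] (α : ι → (E →ₗ[ℝ] ℝ)) :
    Fintype (Chamber α) :=
  have : Finite (Chamber α) := Subtype.finite
  Fintype.ofFinite _

noncomputable instance chamberDecEq {ι : Type*} (α : ι → (E →ₗ[ℝ] ℝ)) :
    DecidableEq (Chamber α) := Classical.decEq _

/-- Hamming distance between two sign vectors. -/
def cdist {ι : Type*} [Fintype ι] (σ τ : ι → SignType) : ℕ :=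
  (Finset.univ.filter fun i => σ i ≠ τ i).card

/-- The `q`-Varchenko matrix of the arrangement, over `ℚ(q)`. -/
def varchenko {ι : Type*} [Fintype ι] (α : ι → (E →ₗ[ℝ] ℝ)) :
    Matrix (Chamber α) (Chamber α) (RatFunc ℚ) :=
  Matrix.of fun σ τ => (RatFunc.X : RatFunc ℚ) ^ cdist σ.1 τ.1

/-- The magnitude of the arrangement: the sum of all entries of the inverse of the
Varchenko matrix. -/
def Mag {ι : Type*} [Fintype ι] (α : ι → (E →ₗ[ℝ] ℝ)) : RatFunc ℚ :=
  ∑ σ : Chamber α, ∑ τ : Chamber α, (varchenko α)⁻¹ σ τ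

/-- A sign vector `F : ι → SignType` is a face of the arrangement `α` if it is realizable. -/
def IsFace {ι : Type*} (α : ι → (E →ₗ[ℝ] ℝ)) (F : ι → SignType) : Prop :=
  ∃ x : E, ∀ i, SignType.sign (α i x) = F i

/-- The type of faces of the arrangement `α`. -/
def Face {ι : Type*} (α : ι → (E →ₗ[ℝ] ℝ)) : Type _ :=
  {F : ι → SignType // IsFace α F}

noncomputable instance faceFintype {ι : Type*} [Fintype ι] (α : ι → (E →ₗ[ℝ] ℝ)) :
    Fintype (Face α) :=
  have : Finite (Face α) := Subtype.finite
  Fintype.ofFinite _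

/-- The set of hyperplanes containing the face `F`. -/
def zeroSet {ι : Type*} [Fintype ι] (F : ι → SignType) : Finset ι :=
  Finset.univ.filter fun i => F i = 0

/-- The codimension of a face: the codimension of the intersection of the hyperplanes
containing it. -/
def codim {ι : Type*} (α : ι → (E →ₗ[ℝ] ℝ)) (F : ι → SignType) : ℕ :=
  Module.finrank ℝ E -
    Module.finrank ℝ (⨅ i ∈ {i | F i = 0}, LinearMap.ker (α i) : Submodule ℝ E)

/-- The rank of the arrangement. -/
def arrRank {ι : Type*} (α : ι → (E →ₗ[ℝ] ℝ)) : ℕ :=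
  Module.finrank ℝ E - Module.finrank ℝ (⨅ i, LinearMap.ker (α i) : Submodule ℝ E)

section MagAux

open Polynomial

noncomputable instance invX : Invertible ((RatFunc.X : RatFunc ℚ)⁻¹) :=
  ⟨RatFunc.X, by rw [mul_inv_cancel₀ RatFunc.X_ne_zero], by rw [inv_mul_cancel₀ RatFunc.X_ne_zero]⟩

lemma aeval_ratX (q : ℚ[X]) :
    Polynomial.aeval (RatFunc.X : RatFunc ℚ) q = algebraMap ℚ[X] (RatFunc ℚ) q := by
  rw [← RatFunc.algebraMap_X]
  rw [show algebraMap ℚ[X] (RatFunc ℚ) X = (IsScalarTower.toAlgHom ℚ ℚ[X] (RatFunc ℚ)) X from rfl]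
  rw [aeval_algHom_apply, aeval_X_left_apply]
  rfl

lemma alg_reverse (p : ℚ[X]) :
    algebraMap ℚ[X] (RatFunc ℚ) p.reverse
      = RatFunc.X ^ p.natDegree * Polynomial.aeval ((RatFunc.X : RatFunc ℚ)⁻¹) p := by
  have h := Polynomial.eval₂_reverse_mul_pow (algebraMap ℚ (RatFunc ℚ))
    ((RatFunc.X : RatFunc ℚ)⁻¹) p
  have hinv : (⅟((RatFunc.X : RatFunc ℚ)⁻¹)) = RatFunc.X := rfl
  rw [hinv] at h
  rw [show Polynomial.eval₂ (algebraMap ℚ (RatFunc ℚ)) RatFunc.X p.reverse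
      = Polynomial.aeval (RatFunc.X : RatFunc ℚ) p.reverse from rfl, aeval_ratX] at h
  rw [show Polynomial.eval₂ (algebraMap ℚ (RatFunc ℚ)) ((RatFunc.X:RatFunc ℚ)⁻¹) p
      = Polynomial.aeval ((RatFunc.X : RatFunc ℚ)⁻¹) p from rfl] at h
  rw [← h, inv_pow, mul_comm, mul_assoc, inv_mul_cancel₀ (pow_ne_zero _ RatFunc.X_ne_zero),
    mul_one]

lemma aevalinv_ne_zero {p : ℚ[X]} (hp : p ≠ 0) :
    Polynomial.aeval ((RatFunc.X : RatFunc ℚ)⁻¹) p ≠ 0 := by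
  intro h
  have h2 := alg_reverse p
  rw [h, mul_zero] at h2
  exact RatFunc.algebraMap_ne_zero (Polynomial.reverse_eq_zero.not.mpr hp) h2

lemma reverse_eval_one (p : ℚ[X]) : p.reverse.eval (1:ℚ) = p.eval 1 := by
  letI : Invertible (1:ℚ) := invertibleOne
  have h := Polynomial.eval₂_reverse_mul_pow (RingHom.id ℚ) (1:ℚ) p
  rw [invOf_one, eval₂_at_one, eval₂_at_one] at h
  simpa using h

lemma coprime_X_of_coeff_zero {R : ℚ[X]} (h : R.coeff 0 ≠ 0) : IsCoprime R (X : ℚ[X]) := by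
  obtain ⟨v, hv⟩ : (X : ℚ[X]) ∣ (1 - C (R.coeff 0)⁻¹ * R) := by
    rw [X_dvd_iff]
    simp [mul_inv_cancel₀ h, inv_mul_cancel₀ h]
  exact ⟨C (R.coeff 0)⁻¹, v, by linear_combination -hv⟩

/-- If `R ∣ R.reverse` then `R.reverse = R * C c` for a constant. -/
lemma reverse_eq_C_mul {R : ℚ[X]} (hR : R ≠ 0) (hdvd : R ∣ R.reverse) :
    ∃ c : ℚ, R.reverse = R * C c := by
  obtain ⟨u, hu⟩ := hdvd
  have hune : u ≠ 0 := by
    rintro rfl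
    rw [mul_zero, Polynomial.reverse_eq_zero] at hu
    exact hR hu
  have hdeg : R.natDegree + u.natDegree ≤ R.natDegree := by
    rw [← Polynomial.natDegree_mul hR hune, ← hu]
    exact R.reverse_natDegree_le
  have hu0 : u.natDegree = 0 := by omega
  exact ⟨u.coeff 0, by rw [hu, ← Polynomial.eq_C_of_natDegree_eq_zero hu0]⟩

variable {E : Type*} [AddCommGroup E] [Module ℝ E]

/-- Negation of a chamber. -/
def negC {ι : Type*} (α : ι → (E →ₗ[ℝ] ℝ)) : Chamber α → Chamber α := fun σ =>
  ⟨fun i => -σ.1 i, fun i h => σ.2.1 i (by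
      simp only at h
      generalize σ.1 i = s at *
      revert h; cases s <;> decide), by
    obtain ⟨x, hx⟩ := σ.2.2
    refine ⟨-x, fun i => ?_⟩
    have := hx i
    simpa [map_neg] using this⟩

lemma negC_involutive {ι : Type*} (α : ι → (E →ₗ[ℝ] ℝ)) : Function.Involutive (negC α) :=
  fun σ => Subtype.ext (funext fun i => neg_neg _)

/-- Negation of chambers, as a permutation. -/
def negE {ι : Type*} (α : ι → (E →ₗ[ℝ] ℝ)) : Equiv.Perm (Chamber α) :=
  (negC_involutive α).toPerm

lemma negE_apply {ι : Type*} (α : ι → (E →ₗ[ℝ] ℝ)) (σ : Chamber α) :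
    ((negE α σ) : Chamber α).1 = fun i => -σ.1 i := rfl

lemma cdist_eq_zero_iff {ι : Type*} [Fintype ι] {α : ι → (E →ₗ[ℝ] ℝ)} (σ τ : Chamber α) :
    cdist σ.1 τ.1 = 0 ↔ σ = τ := by
  constructor
  · intro h
    rw [cdist, Finset.card_eq_zero, Finset.filter_eq_empty_iff] at h
    refine Subtype.ext (funext fun i => ?_)
    have := h (Finset.mem_univ i)
    simpa using this
  · rintro rfl
    simp [cdist]

lemma cdist_negE {ι : Type*} [Fintype ι] {α : ι → (E →ₗ[ℝ] ℝ)} (σ τ : Chamber α) :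
    cdist σ.1 ((negE α τ) : Chamber α).1 + cdist σ.1 τ.1 = Fintype.card ι := by
  classical
  rw [negE_apply]
  have h : ∀ i ∈ Finset.univ, (σ.1 i ≠ -τ.1 i) ↔ ¬ (σ.1 i ≠ τ.1 i) := by
    intro i _
    have h1 := σ.2.1 i
    have h2 := τ.2.1 i
    revert h1 h2
    cases σ.1 i <;> cases τ.1 i <;> decide
  rw [cdist, cdist, Finset.filter_congr h, add_comm]
  rw [Finset.card_filter_add_card_filter_not, Finset.card_univ]

end MagAux

set_option maxHeartbeats 2000000 in
set_option synthInstance.maxHeartbeats 400000 in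
/-- **Palindromicity of the magnitude.** Writing `Mag(𝒜) = P/Q` in lowest terms with `Q`
monic, both `P` and `Q` are palindromic: reversing their coefficient sequences leaves
them unchanged. -/
theorem mag_palindromic {ι : Type*} [Fintype ι] [FiniteDimensional ℝ E]
    (α : ι → (E →ₗ[ℝ] ℝ)) (hα : ∀ i, α i ≠ 0)
    (hker : ∀ i j, LinearMap.ker (α i) = LinearMap.ker (α j) → i = j) :
    (RatFunc.num (Mag α)).reverse = RatFunc.num (Mag α) ∧
      (RatFunc.denom (Mag α)).reverse = RatFunc.denom (Mag α) := by
  classical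
  by_cases hCh : Nonempty (Chamber α)
  case neg =>
    have : IsEmpty (Chamber α) := not_nonempty_iff.mp hCh
    have h0 : Mag α = 0 := by simp [Mag]
    rw [h0, RatFunc.num_zero, RatFunc.denom_zero, Polynomial.reverse_zero, ← Polynomial.C_1,
      Polynomial.reverse_C]
    exact ⟨rfl, rfl⟩
  case pos =>
  set N := Fintype.card ι with hN
  set V := varchenko α with hVdef
  set W : Matrix (Chamber α) (Chamber α) (Polynomial ℚ) :=
    Matrix.of (fun σ τ => Polynomial.X ^ cdist σ.1 τ.1) with hWdef
  have hVW : V = W.map (algebraMap (Polynomial ℚ) (RatFunc ℚ)) := by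
    ext σ τ
    simp [hVdef, varchenko, Matrix.map_apply, map_pow, RatFunc.algebraMap_X, hWdef]
  -- evaluation of W at 0 is the identity matrix
  have hW0 : W.map (Polynomial.evalRingHom (0:ℚ)) = 1 := by
    ext σ τ
    by_cases h : σ = τ
    · subst h
      have : cdist σ.1 σ.1 = 0 := (cdist_eq_zero_iff σ σ).mpr rfl
      simp [hWdef, Matrix.map_apply, this, Matrix.one_apply]
    · have : cdist σ.1 τ.1 ≠ 0 := fun hc => h ((cdist_eq_zero_iff σ τ).mp hc)
      simp [hWdef, Matrix.map_apply, Matrix.one_apply, h, zero_pow this]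
  set D : Polynomial ℚ := W.det with hDdef
  have hD0 : D.eval 0 = 1 := by
    have h := RingHom.map_det (Polynomial.evalRingHom (0:ℚ)) W
    rw [show (Polynomial.evalRingHom (0:ℚ)).mapMatrix W = W.map (Polynomial.evalRingHom (0:ℚ))
        from rfl, hW0, Matrix.det_one] at h
    exact h
  have hDne : D ≠ 0 := fun h => by simp [h] at hD0
  have hdetV : V.det = algebraMap (Polynomial ℚ) (RatFunc ℚ) D := by
    rw [hVW]
    exact (RingHom.map_det (algebraMap (Polynomial ℚ) (RatFunc ℚ)) W).symm
  have hdetU : IsUnit V.det := by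
    rw [hdetV]
    exact (RatFunc.algebraMap_ne_zero hDne).isUnit
  set S : Polynomial ℚ := ∑ σ : Chamber α, ∑ τ : Chamber α, W.adjugate σ τ with hSdef
  have hS0 : S.eval 0 = (Fintype.card (Chamber α) : ℚ) := by
    have hadj : ∀ σ τ : Chamber α, (W.adjugate σ τ).eval 0 = (1 : Matrix (Chamber α) (Chamber α) ℚ) σ τ := by
      intro σ τ
      have h := RingHom.map_adjugate (Polynomial.evalRingHom (0:ℚ)) W
      have h2 := congrFun (congrFun (congrArg Matrix.of.symm h) σ) τ
      rw [show (Polynomial.evalRingHom (0:ℚ)).mapMatrix W = W.map (Polynomial.evalRingHom (0:ℚ))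
        from rfl, hW0, Matrix.adjugate_one] at h
      have := congrFun (congrFun (congrArg (fun M => (M : Matrix _ _ ℚ)) h) σ) τ
      simpa [Matrix.map_apply] using this
    rw [hSdef, Polynomial.eval_finset_sum]
    simp only [Polynomial.eval_finset_sum, hadj]
    simp [Matrix.one_apply, Finset.sum_ite_eq]
  have hMagSD : Mag α = algebraMap (Polynomial ℚ) (RatFunc ℚ) S
      / algebraMap (Polynomial ℚ) (RatFunc ℚ) D := by
    have hinv : V⁻¹ = (algebraMap (Polynomial ℚ) (RatFunc ℚ) D)⁻¹ •
        ((W.adjugate).map (algebraMap (Polynomial ℚ) (RatFunc ℚ))) := by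
      rw [Matrix.inv_def, hdetV, Ring.inverse_eq_inv']
      congr 1
      rw [hVW, ← RingHom.mapMatrix_apply, ← RingHom.mapMatrix_apply, RingHom.map_adjugate]
    rw [show Mag α = ∑ σ : Chamber α, ∑ τ : Chamber α, V⁻¹ σ τ from rfl, hinv]
    simp only [Matrix.smul_apply, Matrix.map_apply, smul_eq_mul]
    rw [div_eq_mul_inv, mul_comm (algebraMap (Polynomial ℚ) (RatFunc ℚ) S)]
    rw [hSdef, map_sum, Finset.mul_sum]
    refine Finset.sum_congr rfl fun σ _ => ?_
    rw [map_sum, Finset.mul_sum]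
  set P := RatFunc.num (Mag α) with hPdef
  set Q := RatFunc.denom (Mag α) with hQdef
  have hQne : Q ≠ 0 := RatFunc.denom_ne_zero _
  have hQD : Q ∣ D := (RatFunc.denom_dvd hDne).mpr ⟨S, hMagSD⟩
  have hQ0 : Q.coeff 0 ≠ 0 := by
    intro h
    have hXQ : (Polynomial.X : Polynomial ℚ) ∣ D := dvd_trans (Polynomial.X_dvd_iff.mpr h) hQD
    rw [Polynomial.X_dvd_iff, Polynomial.coeff_zero_eq_eval_zero, hD0] at hXQ
    exact one_ne_zero hXQ
  have hPD : P * D = S * Q := by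
    have h := RatFunc.num_div_denom (Mag α)
    rw [← hPdef, ← hQdef, hMagSD, div_eq_div_iff (RatFunc.algebraMap_ne_zero hQne)
      (RatFunc.algebraMap_ne_zero hDne)] at h
    exact IsFractionRing.injective (Polynomial ℚ) (RatFunc ℚ) (by rw [_root_.map_mul, _root_.map_mul]; exact h)
  have hP0 : P.coeff 0 ≠ 0 := by
    have h := congrArg (Polynomial.eval 0) hPD
    simp only [Polynomial.eval_mul, hD0, hS0, mul_one] at h
    rw [Polynomial.coeff_zero_eq_eval_zero, h]
    refine mul_ne_zero ?_ (by rwa [← Polynomial.coeff_zero_eq_eval_zero])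
    exact (Nat.cast_ne_zero (R := ℚ)).mpr Fintype.card_ne_zero
  have hPne : P ≠ 0 := fun h => hP0 (by simp [h])
  -- the substitution q ↦ q⁻¹ as a field embedding
  have hinj : Function.Injective
      ((Polynomial.aeval ((RatFunc.X : RatFunc ℚ)⁻¹)).toRingHom : Polynomial ℚ →+* RatFunc ℚ) := by
    rw [injective_iff_map_eq_zero]
    intro p hp
    by_contra hne
    exact aevalinv_ne_zero hne hp
  set φ : RatFunc ℚ →+* RatFunc ℚ := IsFractionRing.lift hinj with hφdef
  have hφalg : ∀ p : Polynomial ℚ, φ (algebraMap (Polynomial ℚ) (RatFunc ℚ) p)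
      = Polynomial.aeval ((RatFunc.X : RatFunc ℚ)⁻¹) p := fun p =>
    IsFractionRing.lift_algebraMap hinj p
  -- functional equation
  have hφMag : φ (Mag α) = RatFunc.X ^ N * Mag α := by
    set e := negE α with hedef
    have hφV : ∀ σ τ : Chamber α, φ (V σ τ) = ((RatFunc.X:RatFunc ℚ)⁻¹)^N * V σ (e τ) := by
      intro σ τ
      have h1 : φ (RatFunc.X) = (RatFunc.X:RatFunc ℚ)⁻¹ := by
        rw [← RatFunc.algebraMap_X, hφalg, Polynomial.aeval_X, RatFunc.algebraMap_X]
      have hd := cdist_negE (α := α) σ τ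
      rw [← hN, ← hedef] at hd
      calc φ (V σ τ) = ((RatFunc.X:RatFunc ℚ)⁻¹) ^ cdist σ.1 τ.1 := by
            rw [show V σ τ = RatFunc.X ^ cdist σ.1 τ.1 from rfl, map_pow, h1]
        _ = ((RatFunc.X:RatFunc ℚ)⁻¹)^N * V σ (e τ) := by
            rw [show V σ (e τ) = RatFunc.X ^ cdist σ.1 (e τ).1 from rfl, ← hd, pow_add,
              mul_right_comm]
            simp only [inv_pow]
            rw [inv_mul_cancel₀ (pow_ne_zero _ RatFunc.X_ne_zero), one_mul]
    have hsub : V.submatrix id (⇑e) * (V⁻¹).submatrix (⇑e) id = 1 := by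
      rw [Matrix.submatrix_mul_equiv V V⁻¹ id e id,
        Matrix.mul_nonsing_inv V hdetU, Matrix.submatrix_id_id]
    have hVmapφ : V.map φ = ((RatFunc.X : RatFunc ℚ)⁻¹) ^ N • (V.submatrix id ⇑e) := by
      ext σ τ
      simp only [Matrix.map_apply, Matrix.smul_apply, Matrix.submatrix_apply, id_eq, smul_eq_mul]
      exact hφV σ τ
    have hmul : (V.map φ) * ((RatFunc.X : RatFunc ℚ) ^ N • (V⁻¹).submatrix (⇑e) id) = 1 := by
      rw [hVmapφ, Matrix.smul_mul, Matrix.mul_smul, smul_smul, inv_pow,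
        inv_mul_cancel₀ (pow_ne_zero _ RatFunc.X_ne_zero), one_smul, hsub]
    have hinvmap : (V⁻¹).map φ = (RatFunc.X : RatFunc ℚ) ^ N • (V⁻¹).submatrix (⇑e) id := by
      have h2 : (V.map φ) * ((V⁻¹).map φ) = 1 := by
        rw [← Matrix.map_mul, Matrix.mul_nonsing_inv V hdetU,
          Matrix.map_one φ (map_zero φ) (_root_.map_one φ)]
      rw [← Matrix.inv_eq_right_inv h2, Matrix.inv_eq_right_inv hmul]
    have hentry : ∀ σ τ : Chamber α, φ (V⁻¹ σ τ) = RatFunc.X ^ N * V⁻¹ (e σ) τ := by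
      intro σ τ
      have h3 := congrFun (congrFun (congrArg (fun M => (M : Matrix _ _ (RatFunc ℚ))) hinvmap) σ) τ
      simpa [Matrix.map_apply, Matrix.smul_apply, Matrix.submatrix_apply, smul_eq_mul] using h3
    rw [show Mag α = ∑ σ : Chamber α, ∑ τ : Chamber α, V⁻¹ σ τ from rfl, map_sum]
    simp_rw [map_sum, hentry, ← Finset.mul_sum]
    congr 1
    exact Equiv.sum_comp e (fun σ => ∑ τ : Chamber α, V⁻¹ σ τ)
  -- polynomial identity
  have E1 : P.reverse * Q * Polynomial.X ^ Q.natDegree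
      = Q.reverse * P * Polynomial.X ^ (N + P.natDegree) := by
    have haQ : Polynomial.aeval ((RatFunc.X:RatFunc ℚ)⁻¹) Q ≠ 0 := aevalinv_ne_zero hQne
    have hMagPQ : Mag α = algebraMap (Polynomial ℚ) (RatFunc ℚ) P
        / algebraMap (Polynomial ℚ) (RatFunc ℚ) Q := (RatFunc.num_div_denom _).symm
    have h := hφMag
    rw [hMagPQ, map_div₀, hφalg, hφalg, ← mul_div_assoc,
      div_eq_div_iff haQ (RatFunc.algebraMap_ne_zero hQne)] at h
    apply IsFractionRing.injective (Polynomial ℚ) (RatFunc ℚ)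
    rw [_root_.map_mul, _root_.map_mul, _root_.map_mul, _root_.map_mul, map_pow, map_pow,
      RatFunc.algebraMap_X, alg_reverse, alg_reverse]
    linear_combination (RatFunc.X:RatFunc ℚ) ^ (P.natDegree + Q.natDegree) * h
  -- endgame
  have hcop : IsCoprime P Q := RatFunc.isCoprime_num_denom _
  have hQdvd : Q ∣ Q.reverse := by
    have h1 : Q ∣ Q.reverse * (P * Polynomial.X ^ (N + P.natDegree)) :=
      ⟨P.reverse * Polynomial.X ^ Q.natDegree, by linear_combination -E1⟩
    exact (hcop.symm.mul_right ((coprime_X_of_coeff_zero hQ0).pow_right)).dvd_of_dvd_mul_right h1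
  have hPdvd : P ∣ P.reverse := by
    have h1 : P ∣ P.reverse * (Q * Polynomial.X ^ Q.natDegree) :=
      ⟨Q.reverse * Polynomial.X ^ (N + P.natDegree), by linear_combination E1⟩
    exact (hcop.mul_right ((coprime_X_of_coeff_zero hP0).pow_right)).dvd_of_dvd_mul_right h1
  obtain ⟨c, hc⟩ := reverse_eq_C_mul hQne hQdvd
  obtain ⟨c', hc'⟩ := reverse_eq_C_mul hPne hPdvd
  -- determine c
  have hcc : c * c = 1 := by
    have hQmon : Q.Monic := RatFunc.monic_denom _
    have h1 : Q.reverse.coeff 0 = Q.coeff 0 * c := by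
      rw [hc, Polynomial.mul_coeff_zero, Polynomial.coeff_C_zero]
    rw [Polynomial.coeff_zero_reverse, hQmon.leadingCoeff] at h1
    have h2 : Q.reverse.coeff Q.natDegree = c := by
      rw [hc, Polynomial.coeff_mul_C, hQmon.coeff_natDegree, one_mul]
    rw [Polynomial.coeff_reverse, Polynomial.revAt_le le_rfl, Nat.sub_self] at h2
    calc c * c = Q.coeff 0 * c := by rw [h2]
      _ = 1 := h1.symm
  have hc'c : c' = c := by
    have hPQ : (P * Q) * (Polynomial.C c' * Polynomial.X ^ Q.natDegree)
        = (P * Q) * (Polynomial.C c * Polynomial.X ^ (N + P.natDegree)) := by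
      linear_combination E1 - Q * Polynomial.X ^ Q.natDegree * hc'
        + P * Polynomial.X ^ (N + P.natDegree) * hc
    have h3 := mul_left_cancel₀ (mul_ne_zero hPne hQne) hPQ
    have h4 := congrArg (Polynomial.eval 1) h3
    simpa using h4
  -- rule out c = -1
  have hc1 : c = 1 := by
    rcases mul_self_eq_one_iff.mp hcc with h | h
    · exact h
    exfalso
    have hQ1 : Q.eval 1 = 0 := by
      have := congrArg (Polynomial.eval 1) hc
      rw [reverse_eval_one, h] at this
      simp at this
      linarith
    have hP1 : P.eval 1 = 0 := by
      have := congrArg (Polynomial.eval 1) hc'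
      rw [reverse_eval_one, hc'c, h] at this
      simp at this
      linarith
    have hd1 : (Polynomial.X - Polynomial.C (1:ℚ)) ∣ P := Polynomial.dvd_iff_isRoot.mpr hP1
    have hd2 : (Polynomial.X - Polynomial.C (1:ℚ)) ∣ Q := Polynomial.dvd_iff_isRoot.mpr hQ1
    exact Polynomial.not_isUnit_X_sub_C _ (hcop.isUnit_of_dvd' hd1 hd2)
  constructor
  · rw [hc', hc'c, hc1, Polynomial.C_1, mul_one]
  · rw [hc, hc1, Polynomial.C_1, mul_one]

end
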